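/- arXiv:2501.13192 — 3 statements merged into one kernel-verified Lean document; each statement's English description precedes it below -/
import Mathlib

section
/- (Hardy–Littlewood inequality) For non-negative measurable functions f, g : ℝⁿ → ℝ that vanish at infinity, ∫ f(x) g(x) dx ≤ ∫ f*(x) g*(x) dx, where f* and g* are the symmetric decreasing rearrangements of f and g. -/
open MeasureTheory

open Set

open MeasureTheory Set

lemma aux_ofReal (a : ℝ) :
    ENNReal.ofReal a = ∫⁻ s in Ioi (0:ℝ), (if s < a then (1:ENNReal) else 0) := by
  have h : ∀ s : ℝ, (if s < a then (1:ENNReal) else 0) = (Iio a).indicator (fun _ => 1) s := by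
    intro s; simp [Set.indicator_apply, Set.mem_Iio]
  simp only [h]
  rw [lintegral_indicator measurableSet_Iio _]
  simp only [lintegral_const, Measure.restrict_restrict measurableSet_Iio]
  rw [Set.Iio_inter_Ioi]
  simp [Real.volume_Ioo]

lemma double_layer {α : Type*} [MeasurableSpace α] (μ : Measure α) [SigmaFinite μ]
    (f g : α → ℝ) (hf : Measurable f) (hg : Measurable g)
    (hf0 : ∀ x, 0 ≤ f x) :
    ∫⁻ x, ENNReal.ofReal (f x * g x) ∂μ
      = ∫⁻ s in Ioi (0:ℝ), ∫⁻ t in Ioi (0:ℝ),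
          μ ({x | s < f x} ∩ {x | t < g x}) := by
  have key : ∀ x, ENNReal.ofReal (f x * g x)
      = ∫⁻ s in Ioi (0:ℝ), ∫⁻ t in Ioi (0:ℝ),
          (if s < f x then (1:ENNReal) else 0) * (if t < g x then 1 else 0) := by
    intro x
    rw [ENNReal.ofReal_mul (hf0 x), aux_ofReal (f x),
      ← lintegral_mul_const' _ _ ENNReal.ofReal_ne_top]
    congr 1
    ext s
    rw [aux_ofReal (g x), ← lintegral_const_mul' _ _ (by split <;> simp)]
  simp only [key]
  have hmeas2 : ∀ s : ℝ, Measurable fun p : α × ℝ =>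
      (if s < f p.1 then (1:ENNReal) else 0) * (if p.2 < g p.1 then 1 else 0) := by
    intro s
    exact Measurable.mul
      (Measurable.ite (measurableSet_lt measurable_const (hf.comp measurable_fst)) measurable_const measurable_const)
      (Measurable.ite (measurableSet_lt measurable_snd (hg.comp measurable_fst)) measurable_const measurable_const)
  have hmeas1 : Measurable fun p : α × ℝ =>
      ∫⁻ t in Ioi (0:ℝ), (if p.2 < f p.1 then (1:ENNReal) else 0) * (if t < g p.1 then 1 else 0) := by
    apply Measurable.lintegral_prod_right'
      (f := fun q : (α × ℝ) × ℝ =>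
        (if q.1.2 < f q.1.1 then (1:ENNReal) else 0) * (if q.2 < g q.1.1 then 1 else 0))
    exact Measurable.mul
      (Measurable.ite (measurableSet_lt (measurable_snd.comp measurable_fst) (hf.comp (measurable_fst.comp measurable_fst))) measurable_const measurable_const)
      (Measurable.ite (measurableSet_lt measurable_snd (hg.comp (measurable_fst.comp measurable_fst))) measurable_const measurable_const)
  rw [lintegral_lintegral_swap hmeas1.aemeasurable]
  congr 1
  ext s
  rw [lintegral_lintegral_swap (hmeas2 s).aemeasurable]
  congr 1
  ext t
  have h : ∀ x, (if s < f x then (1:ENNReal) else 0) * (if t < g x then 1 else 0)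
      = ({x | s < f x} ∩ {x | t < g x}).indicator (fun _ => 1) x := by
    intro x
    simp only [Set.indicator_apply, Set.mem_inter_iff, Set.mem_setOf_eq]
    split_ifs <;> simp_all
  simp only [h]
  rw [lintegral_indicator ((measurableSet_lt measurable_const hf).inter (measurableSet_lt measurable_const hg)) _]
  simp

lemma nested {E : Type*} [NormedAddCommGroup E] (A B : Set E)
    (hA : ∀ x ∈ A, ∀ y : E, ‖y‖ ≤ ‖x‖ → y ∈ A)
    (hB : ∀ x ∈ B, ∀ y : E, ‖y‖ ≤ ‖x‖ → y ∈ B) :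
    A ⊆ B ∨ B ⊆ A := by
  by_cases h : A ⊆ B
  · exact Or.inl h
  · right
    obtain ⟨a, haA, haB⟩ := not_subset.mp h
    intro b hb
    rcases le_total ‖b‖ ‖a‖ with hle | hle
    · exact hA a haA b hle
    · exact absurd (hB b hb a hle) haB

/-- Hardy–Littlewood inequality: for non-negative measurable f, g vanishing at
infinity, ∫ f g ≤ ∫ f* g*, where f*, g* are the symmetric decreasing
rearrangements (characterized here by radial symmetry, radial monotonicity and
equimeasurability with f, g). -/
theorem stmt7 (n : ℕ) (f g fs gs : EuclideanSpace ℝ (Fin n) → ℝ)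
    (hf : Measurable f) (hf0 : ∀ x, 0 ≤ f x)
    (hfvan : ∀ t > (0 : ℝ), volume {x | t < f x} ≠ ⊤)
    (hg : Measurable g) (hg0 : ∀ x, 0 ≤ g x)
    (hgvan : ∀ t > (0 : ℝ), volume {x | t < g x} ≠ ⊤)
    (hfs : Measurable fs) (hfs0 : ∀ x, 0 ≤ fs x)
    (hfsrad : ∀ x y, ‖x‖ = ‖y‖ → fs x = fs y)
    (hfsmono : ∀ x y, ‖x‖ ≤ ‖y‖ → fs y ≤ fs x)
    (hfseq : ∀ t > (0 : ℝ), volume {x | t < fs x} = volume {x | t < f x})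
    (hgs : Measurable gs) (hgs0 : ∀ x, 0 ≤ gs x)
    (hgsrad : ∀ x y, ‖x‖ = ‖y‖ → gs x = gs y)
    (hgsmono : ∀ x y, ‖x‖ ≤ ‖y‖ → gs y ≤ gs x)
    (hgseq : ∀ t > (0 : ℝ), volume {x | t < gs x} = volume {x | t < g x}) :
    ∫⁻ x, ENNReal.ofReal (f x * g x) ≤ ∫⁻ x, ENNReal.ofReal (fs x * gs x) := by
  rw [double_layer volume f g hf hg hf0, double_layer volume fs gs hfs hgs hfs0]
  apply lintegral_mono_ae
  filter_upwards [ae_restrict_mem measurableSet_Ioi] with s hs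
  apply lintegral_mono_ae
  filter_upwards [ae_restrict_mem measurableSet_Ioi] with t ht
  simp only [Set.mem_Ioi] at hs ht
  -- RHS equals min of measures
  have hAs : ∀ x ∈ {x | s < fs x}, ∀ y : EuclideanSpace ℝ (Fin n), ‖y‖ ≤ ‖x‖ → y ∈ {x | s < fs x} :=
    fun x hx y hy => lt_of_lt_of_le hx (hfsmono y x hy)
  have hBs : ∀ x ∈ {x | t < gs x}, ∀ y : EuclideanSpace ℝ (Fin n), ‖y‖ ≤ ‖x‖ → y ∈ {x | t < gs x} :=
    fun x hx y hy => lt_of_lt_of_le hx (hgsmono y x hy)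
  have hmin : volume ({x | s < fs x} ∩ {x | t < gs x})
      = min (volume {x | s < fs x}) (volume {x | t < gs x}) := by
    rcases nested _ _ hAs hBs with h | h
    · rw [Set.inter_eq_self_of_subset_left h, min_eq_left (measure_mono h)]
    · rw [Set.inter_eq_self_of_subset_right h, min_eq_right (measure_mono h)]
  rw [hmin, hfseq s hs, hgseq t ht]
  exact le_min (measure_mono Set.inter_subset_left |>.trans_eq rfl)
    (measure_mono Set.inter_subset_right)
end

section
/- Let f, g : ℝⁿ → [0,∞) vanish at infinity with symmetric decreasing rearrangements f*, g* satisfying ∫_{B(r)} f*(x)dx ≤ ∫_{B(r)} g*(x)dx for every ball B(r) of radius r ≥ 0 centered at the origin. Then for any non-negative radially non-increasing function h, ∫_{B(r)} h(x) f*(x) dx ≤ ∫_{B(r)} h(x) g*(x) dx for all r ≥ 0. -/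
open MeasureTheory Set

variable {n : ℕ}

local notation "E" => EuclideanSpace ℝ (Fin n)

/-- Integral comparison extends from closed balls to open balls. -/
lemma ball_case (fs gs : E → ℝ)
    (hdom : ∀ r ≥ (0 : ℝ),
      ∫⁻ x in Metric.closedBall (0 : E) r, ENNReal.ofReal (fs x)
        ≤ ∫⁻ x in Metric.closedBall (0 : E) r, ENNReal.ofReal (gs x))
    (s : ℝ) :
    ∫⁻ x in Metric.ball (0 : E) s, ENNReal.ofReal (fs x)
      ≤ ∫⁻ x in Metric.ball (0 : E) s, ENNReal.ofReal (gs x) := by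
  rcases le_or_gt s 0 with hs | hs
  · rw [Metric.ball_eq_empty.2 hs]; simp
  · have hunion : Metric.ball (0 : E) s
        = ⋃ k : ℕ, Metric.closedBall (0 : E) (s - s / (k + 1)) := by
      ext x
      simp only [Metric.mem_ball, Metric.mem_closedBall, mem_iUnion, dist_zero_right]
      constructor
      · intro hx
        obtain ⟨k, hk⟩ := exists_nat_gt (s / (s - ‖x‖))
        refine ⟨k, ?_⟩
        have hsx : 0 < s - ‖x‖ := by linarith
        have h1 : s / (s - ‖x‖) < k + 1 := by linarith
        have h2 : s / (k + 1) < s - ‖x‖ := by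
          rw [div_lt_iff₀ (by positivity)]
          calc s = (s / (s - ‖x‖)) * (s - ‖x‖) := by field_simp
            _ < (k + 1) * (s - ‖x‖) := by
                exact mul_lt_mul_of_pos_right h1 hsx
            _ = (s - ‖x‖) * (k + 1) := by ring
        linarith
      · rintro ⟨k, hk⟩
        have : 0 < s / (k + 1) := by positivity
        linarith
    have hmono : Monotone fun k : ℕ =>
        Metric.closedBall (0 : E) (s - s / (k + 1)) := by
      intro a b hab
      apply Metric.closedBall_subset_closedBall
      have hcast : (a : ℝ) + 1 ≤ (b : ℝ) + 1 := by
        have : (a : ℝ) ≤ b := Nat.cast_le.2 hab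
        linarith
      have : (s : ℝ) / (b + 1) ≤ s / (a + 1) :=
        div_le_div_of_nonneg_left hs.le (by positivity) hcast
      linarith
    set νf := volume.withDensity (fun x : E => ENNReal.ofReal (fs x)) with hνf
    set νg := volume.withDensity (fun x : E => ENNReal.ofReal (gs x)) with hνg
    calc ∫⁻ x in Metric.ball (0 : E) s, ENNReal.ofReal (fs x)
        = νf (Metric.ball (0 : E) s) := by
          rw [hνf, withDensity_apply _ measurableSet_ball]
      _ = ⨆ k : ℕ, νf (Metric.closedBall (0 : E) (s - s / (k + 1))) := by
          rw [hunion]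
          exact (hmono.directed_le).measure_iUnion
      _ ≤ ⨆ k : ℕ, νg (Metric.closedBall (0 : E) (s - s / (k + 1))) := by
          apply iSup_mono
          intro k
          have hr : (0 : ℝ) ≤ s - s / (k + 1) := by
            have h1 : s / (k + 1) ≤ s / 1 := by
              apply div_le_div_of_nonneg_left hs.le one_pos
              push_cast; linarith
            simpa using by linarith [h1]
          rw [hνf, hνg, withDensity_apply _ measurableSet_closedBall,
            withDensity_apply _ measurableSet_closedBall]
          exact hdom _ hr
      _ ≤ νg (Metric.ball (0 : E) s) := by
          apply iSup_le
          intro k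
          apply measure_mono
          apply Metric.closedBall_subset_ball
          have : 0 < s / (k + 1) := by positivity
          linarith
      _ = ∫⁻ x in Metric.ball (0 : E) s, ENNReal.ofReal (gs x) := by
          rw [hνg, withDensity_apply _ measurableSet_ball]

/-- Key lemma: comparison over the intersection of a radially downward-closed
set with a closed ball. -/
lemma key_lemma (fs gs : E → ℝ)
    (hdom : ∀ r ≥ (0 : ℝ),
      ∫⁻ x in Metric.closedBall (0 : E) r, ENNReal.ofReal (fs x)
        ≤ ∫⁻ x in Metric.closedBall (0 : E) r, ENNReal.ofReal (gs x))
    (S : Set E) (hS : ∀ x y : E, ‖y‖ ≤ ‖x‖ → x ∈ S → y ∈ S)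
    (r : ℝ) :
    ∫⁻ x in S ∩ Metric.closedBall (0 : E) r, ENNReal.ofReal (fs x)
      ≤ ∫⁻ x in S ∩ Metric.closedBall (0 : E) r, ENNReal.ofReal (gs x) := by
  set A := S ∩ Metric.closedBall (0 : E) r with hA
  rcases eq_empty_or_nonempty A with hAe | hAne
  · rw [hAe]; simp
  · set s := sSup ((fun x : E => ‖x‖) '' A) with hs
    have hbdd : BddAbove ((fun x : E => ‖x‖) '' A) := by
      refine ⟨r, ?_⟩
      rintro _ ⟨x, hx, rfl⟩
      simpa [dist_zero_right] using hx.2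
    have hub : ∀ x ∈ A, ‖x‖ ≤ s := fun x hx => le_csSup hbdd ⟨x, hx, rfl⟩
    have hsr : s ≤ r := by
      apply csSup_le (hAne.image _)
      rintro _ ⟨x, hx, rfl⟩
      simpa [dist_zero_right] using hx.2
    by_cases hsphere : ∃ x ∈ A, ‖x‖ = s
    · -- A is the closed ball of radius s
      obtain ⟨x₀, hx₀A, hx₀⟩ := hsphere
      have hAeq : A = Metric.closedBall (0 : E) s := by
        ext y
        simp only [Metric.mem_closedBall, dist_zero_right]
        constructor
        · exact fun hy => hub y hy
        · intro hy
          refine ⟨hS x₀ y (hx₀ ▸ hy) hx₀A.1, ?_⟩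
          simp only [Metric.mem_closedBall, dist_zero_right]
          linarith
      have hs0 : 0 ≤ s := le_trans (norm_nonneg x₀) (hub x₀ hx₀A)
      rw [hAeq]
      exact hdom s hs0
    · -- A is the open ball of radius s
      push_neg at hsphere
      have hAeq : A = Metric.ball (0 : E) s := by
        ext y
        simp only [Metric.mem_ball, dist_zero_right]
        constructor
        · exact fun hy => lt_of_le_of_ne (hub y hy) (hsphere y hy)
        · intro hy
          obtain ⟨_, ⟨x, hxA, rfl⟩, hx⟩ := exists_lt_of_lt_csSup (hAne.image _) hy
          refine ⟨hS x y hx.le hxA.1, ?_⟩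
          simp only [Metric.mem_closedBall, dist_zero_right]
          have := hub x hxA
          linarith [(Metric.mem_closedBall.1 hxA.2)]
      rw [hAeq]
      exact ball_case fs gs hdom s

/-- If the symmetric decreasing rearrangements f*, g* satisfy
∫_{B(r)} f* ≤ ∫_{B(r)} g* for all balls B(r) centered at the origin, then for
any non-negative radially non-increasing h, ∫_{B(r)} h f* ≤ ∫_{B(r)} h g*. -/
theorem stmt8 (n : ℕ) (fs gs h : EuclideanSpace ℝ (Fin n) → ℝ)
    (hfs : Measurable fs) (hfs0 : ∀ x, 0 ≤ fs x)
    (hfsrad : ∀ x y, ‖x‖ = ‖y‖ → fs x = fs y)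
    (hfsmono : ∀ x y, ‖x‖ ≤ ‖y‖ → fs y ≤ fs x)
    (hgs : Measurable gs) (hgs0 : ∀ x, 0 ≤ gs x)
    (hgsrad : ∀ x y, ‖x‖ = ‖y‖ → gs x = gs y)
    (hgsmono : ∀ x y, ‖x‖ ≤ ‖y‖ → gs y ≤ gs x)
    (hh : Measurable h) (hh0 : ∀ x, 0 ≤ h x)
    (hhrad : ∀ x y, ‖x‖ = ‖y‖ → h x = h y)
    (hhmono : ∀ x y, ‖x‖ ≤ ‖y‖ → h y ≤ h x)
    (hdom : ∀ r ≥ (0 : ℝ),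
      ∫⁻ x in Metric.closedBall (0 : EuclideanSpace ℝ (Fin n)) r, ENNReal.ofReal (fs x)
        ≤ ∫⁻ x in Metric.closedBall (0 : EuclideanSpace ℝ (Fin n)) r, ENNReal.ofReal (gs x)) :
    ∀ r ≥ (0 : ℝ),
      ∫⁻ x in Metric.closedBall (0 : EuclideanSpace ℝ (Fin n)) r, ENNReal.ofReal (h x * fs x)
        ≤ ∫⁻ x in Metric.closedBall (0 : EuclideanSpace ℝ (Fin n)) r,
            ENNReal.ofReal (h x * gs x) := by
  intro r hr
  set B := Metric.closedBall (0 : EuclideanSpace ℝ (Fin n)) r with hB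
  have hBmeas : MeasurableSet B := measurableSet_closedBall
  -- layer cake representation for ∫ h F over B
  have hmain : ∀ (F : EuclideanSpace ℝ (Fin n) → ℝ), Measurable F → (∀ x, 0 ≤ F x) →
      ∫⁻ x in B, ENNReal.ofReal (h x * F x)
        = ∫⁻ t in Ioi (0 : ℝ), ∫⁻ x in {a | t < h a} ∩ B, ENNReal.ofReal (F x) := by
    intro F hF hF0
    set μF := (volume.restrict B).withDensity (fun x => ENNReal.ofReal (F x)) with hμF
    have step1 : ∫⁻ x in B, ENNReal.ofReal (h x * F x)
        = ∫⁻ x, ENNReal.ofReal (h x) ∂μF := by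
      rw [hμF, lintegral_withDensity_eq_lintegral_mul _ (hF.ennreal_ofReal)
        (hh.ennreal_ofReal)]
      apply lintegral_congr
      intro x
      simp [ENNReal.ofReal_mul (hh0 x), mul_comm]
    have step2 : ∫⁻ x, ENNReal.ofReal (h x) ∂μF
        = ∫⁻ t in Ioi (0 : ℝ), μF {a | t < h a} := by
      exact lintegral_eq_lintegral_meas_lt μF
        (Filter.Eventually.of_forall hh0) hh.aemeasurable
    have step3 : ∀ t : ℝ, μF {a | t < h a}
        = ∫⁻ x in {a | t < h a} ∩ B, ENNReal.ofReal (F x) := by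
      intro t
      have hSm : MeasurableSet {a | t < h a} := measurableSet_lt measurable_const hh
      rw [hμF, withDensity_apply _ hSm, Measure.restrict_restrict hSm]
    rw [step1, step2]
    exact lintegral_congr fun t => step3 t
  rw [hmain fs hfs hfs0, hmain gs hgs hgs0]
  apply lintegral_mono
  intro t
  apply key_lemma fs gs hdom
  intro x y hxy hx
  exact lt_of_lt_of_le hx (hhmono y x hxy)
end

section
/- Let V_{k+1} : ℝⁿ × S → ℝ be measurable and satisfy V_{k+1}(−e, R) = V_{k+1}(e, R) for all e ∈ ℝⁿ and R in the set S of symmetric PSD matrices. Suppose ĕ_{k+1} = (1−θ̄) A ĕ + K ν and R_{k+1} = (1−θ̄) A R Aᵀ + θ̄̄ A ĕ ĕᵀ Aᵀ, where ν is an ℝᵐ-valued random vector with sign-symmetric distribution and θ̄, θ̄̄ are random coefficients independent of ν (depending on δ but not on ĕ). Then the function (ĕ, R) ↦ E[V_{k+1}(ĕ_{k+1}, R_{k+1})] is symmetric in ĕ: flipping ĕ ↦ −ĕ leaves the expectation unchanged. -/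
open MeasureTheory Matrix

/-- Borel measurable structure on real matrices (entrywise). -/
instance matrixMeasurableSpace {n : ℕ} :
    MeasurableSpace (Matrix (Fin n) (Fin n) ℝ) :=
  MeasurableSpace.pi (X := fun _ : Fin n => Fin n → ℝ)

/-- Inductive symmetry step for the value function: if V_{k+1}(·, R) is even in
its first argument, ν has a sign-symmetric law, and the random coefficients
θ̄, θ̄̄ are independent of ν, then (ĕ, R) ↦ E[V_{k+1}(ĕ_{k+1}, R_{k+1})] with
ĕ_{k+1} = (1−θ̄)Aĕ + Kν and R_{k+1} = (1−θ̄)ARAᵀ + θ̄̄AĕĕᵀAᵀ is even in ĕ. -/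
theorem stmt19 {Ω : Type*} [MeasurableSpace Ω] (μ : Measure Ω) [IsProbabilityMeasure μ]
    (n m : ℕ) (A : Matrix (Fin n) (Fin n) ℝ) (K : Matrix (Fin n) (Fin m) ℝ)
    (V : (Fin n → ℝ) → Matrix (Fin n) (Fin n) ℝ → ℝ)
    (hVmeas : Measurable fun p : (Fin n → ℝ) × Matrix (Fin n) (Fin n) ℝ => V p.1 p.2)
    (hVsym : ∀ e R, V (-e) R = V e R)
    (ν : Ω → Fin m → ℝ) (θb θbb : Ω → ℝ)
    (hνmeas : Measurable ν)
    (hνsym : Measure.map ν μ = Measure.map (fun ω => -ν ω) μ)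
    (hθmeas : Measurable fun ω => (θb ω, θbb ω))
    (hindep : ProbabilityTheory.IndepFun (fun ω => (θb ω, θbb ω)) ν μ)
    (eb : Fin n → ℝ) (R : Matrix (Fin n) (Fin n) ℝ) :
    ∫ ω, V ((1 - θb ω) • (A *ᵥ (-eb)) + K *ᵥ ν ω)
        ((1 - θb ω) • (A * R * Aᵀ) + θbb ω • (A * vecMulVec (-eb) (-eb) * Aᵀ)) ∂μ
      = ∫ ω, V ((1 - θb ω) • (A *ᵥ eb) + K *ᵥ ν ω)
          ((1 - θb ω) • (A * R * Aᵀ) + θbb ω • (A * vecMulVec eb eb * Aᵀ)) ∂μ := by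

  classical
  set C : Matrix (Fin n) (Fin n) ℝ := A * R * Aᵀ with hC
  set D : Matrix (Fin n) (Fin n) ℝ := A * vecMulVec eb eb * Aᵀ with hD
  have hvmv : vecMulVec (-eb) (-eb) = vecMulVec eb eb := by
    ext i j; simp [vecMulVec_apply]
  set h : (ℝ × ℝ) × (Fin m → ℝ) → ℝ := fun p =>
    V ((1 - p.1.1) • (A *ᵥ eb) + K *ᵥ p.2)
      ((1 - p.1.1) • C + p.1.2 • D) with hh
  have hKm : Measurable fun v : Fin m → ℝ => K *ᵥ v := by
    apply measurable_pi_lambda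
    intro i
    simp only [mulVec, dotProduct]
    exact Finset.measurable_sum _ fun j _ =>
      (measurable_const.mul (measurable_pi_apply j))
  have hhm : Measurable h := by
    rw [hh]
    have hE : Measurable fun p : (ℝ × ℝ) × (Fin m → ℝ) =>
        (1 - p.1.1) • (A *ᵥ eb) + K *ᵥ p.2 := by
      apply measurable_pi_lambda
      intro i
      simp only [Pi.add_apply, Pi.smul_apply, smul_eq_mul]
      exact ((measurable_const.sub (measurable_fst.comp measurable_fst)).mul
        measurable_const).add ((hKm.comp measurable_snd).eval)
    have hM : Measurable fun p : (ℝ × ℝ) × (Fin m → ℝ) =>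
        (1 - p.1.1) • C + p.1.2 • D := by
      refine @measurable_pi_lambda _ (Fin n) (fun _ => Fin n → ℝ) _ _ _ ?_
      intro i
      apply measurable_pi_lambda
      intro j
      simp only [Matrix.add_apply, Matrix.smul_apply, smul_eq_mul]
      exact ((measurable_const.sub (measurable_fst.comp measurable_fst)).mul
        measurable_const).add ((measurable_snd.comp measurable_fst).mul measurable_const)
    exact hVmeas.comp (hE.prodMk hM)
  have hθν : Measurable fun ω => ((θb ω, θbb ω), ν ω) := hθmeas.prodMk hνmeas
  have hθνn : Measurable fun ω => ((θb ω, θbb ω), -ν ω) := hθmeas.prodMk hνmeas.neg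
  have hmapeq : μ.map (fun ω => ((θb ω, θbb ω), -ν ω))
      = μ.map (fun ω => ((θb ω, θbb ω), ν ω)) := by
    have hindep' : ProbabilityTheory.IndepFun (fun ω => (θb ω, θbb ω))
        (fun ω => -ν ω) μ := hindep.comp measurable_id measurable_neg
    have hnm : AEMeasurable (fun ω => -ν ω) μ := hνmeas.neg.aemeasurable
    rw [(ProbabilityTheory.indepFun_iff_map_prod_eq_prod_map_map hθmeas.aemeasurable
        hnm).mp hindep',
      (ProbabilityTheory.indepFun_iff_map_prod_eq_prod_map_map hθmeas.aemeasurable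
        hνmeas.aemeasurable).mp hindep, ← hνsym]
  calc
    ∫ ω, V ((1 - θb ω) • (A *ᵥ (-eb)) + K *ᵥ ν ω)
        ((1 - θb ω) • (A * R * Aᵀ) + θbb ω • (A * vecMulVec (-eb) (-eb) * Aᵀ)) ∂μ
      = ∫ ω, h ((θb ω, θbb ω), -ν ω) ∂μ := by
        refine integral_congr_ae (Filter.Eventually.of_forall fun ω => ?_)
        simp only [hh, hvmv, ← hC, ← hD]
        rw [Matrix.mulVec_neg, smul_neg, Matrix.mulVec_neg, ← hVsym]
        congr 1
        abel
    _ = ∫ p, h p ∂(μ.map (fun ω => ((θb ω, θbb ω), -ν ω))) :=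
        (integral_map hθνn.aemeasurable hhm.aestronglyMeasurable).symm
    _ = ∫ p, h p ∂(μ.map (fun ω => ((θb ω, θbb ω), ν ω))) := by rw [hmapeq]
    _ = ∫ ω, h ((θb ω, θbb ω), ν ω) ∂μ :=
        integral_map hθν.aemeasurable hhm.aestronglyMeasurable
    _ = _ := by simp only [hh, ← hC, ← hD]
end
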